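/- arXiv:math/9902080 — 3 statements merged into one kernel-verified Lean document; each statement's English description precedes it below -/
import Mathlib

section
/- Let h₊(τ) = -log π - γ - 1/(1/4 + τ²) + Σ_{j≥1} (1/j - (4j+1)/((2j+1/2)² + τ²)) for τ ∈ ℝ, where γ is the Euler–Mascheroni constant. Then h₊ attains its minimum at τ = 0 and h₊(0) = -(log(8π) + γ) - π/2. -/
open Real

/-- The spectral function of the real-place conductor operator on the critical line. -/
noncomputable def hPlus (τ : ℝ) : ℝ :=
  -Real.log Real.pi - Real.eulerMascheroniConstant - 1 / (1/4 + τ^2) +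
    ∑' j : ℕ, (1 / ((j:ℝ) + 1) -
      (4 * ((j:ℝ) + 1) + 1) / ((2 * ((j:ℝ) + 1) + 1/2)^2 + τ^2))

/-!
At `τ = 0` the `j`-th term of the series is `1/(j+1) - 4/(4j+5)`. Its partial sums are expressed
through harmonic numbers and Leibniz's series for `π/4`; since `H (c n) - H n → log c`, the series
sums to `4 - π/2 - 3 log 2`, which gives the value of `h₊(0)`. Every term of `h₊` other than the
constants is nondecreasing in `τ²`, hence the minimum at `τ = 0`.
-/

open Filter Finset Topology

theorem tendsto_harmonic_mul_sub_harmonic {c : ℕ} (hc : c ≠ 0) :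
    Tendsto (fun n : ℕ ↦ (harmonic (c * n) : ℝ) - harmonic n) atTop (𝓝 (log c)) := by
  have hcn : Tendsto (fun n : ℕ ↦ c * n) atTop atTop :=
    tendsto_id.const_mul_atTop' (Nat.pos_of_ne_zero hc)
  have h := ((tendsto_harmonic_sub_log.comp hcn).sub tendsto_harmonic_sub_log).add_const (log c)
  rw [sub_self, zero_add] at h
  refine h.congr' ?_
  filter_upwards [eventually_ne_atTop 0] with n hn
  simp only [Function.comp_apply, Nat.cast_mul]
  rw [log_mul (by exact_mod_cast hc) (by exact_mod_cast hn)]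
  ring

noncomputable def hPlusTerm (τ : ℝ) (j : ℕ) : ℝ :=
  1 / ((j:ℝ) + 1) - (4 * ((j:ℝ) + 1) + 1) / ((2 * ((j:ℝ) + 1) + 1/2)^2 + τ^2)

theorem hPlus_eq_tsum_hPlusTerm (τ : ℝ) :
    hPlus τ = -log π - eulerMascheroniConstant - 1 / (1/4 + τ^2) + ∑' j, hPlusTerm τ j :=
  rfl

theorem hPlusTerm_zero (j : ℕ) : hPlusTerm 0 j = 1 / ((j:ℝ) + 1) - 4 / (4 * j + 5) := by
  have : (4 * (j:ℝ) + 5) ≠ 0 := by positivity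
  rw [hPlusTerm]
  field_simp
  ring

theorem hPlusTerm_zero_nonneg (j : ℕ) : 0 ≤ hPlusTerm 0 j := by
  rw [hPlusTerm_zero, sub_nonneg, div_le_div_iff₀ (by positivity) (by positivity)]
  linarith

theorem hPlusTerm_le_of_sq_le {σ τ : ℝ} (h : σ ^ 2 ≤ τ ^ 2) (j : ℕ) :
    hPlusTerm σ j ≤ hPlusTerm τ j := by
  unfold hPlusTerm
  gcongr

theorem hPlusTerm_le_mul_hPlusTerm_zero (τ : ℝ) (j : ℕ) :
    hPlusTerm τ j ≤ (1 + 4 * τ ^ 2) * hPlusTerm 0 j := by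
  rw [hPlusTerm_zero, hPlusTerm, ← sub_nonneg]
  have key : (1 + 4 * τ ^ 2) * (1 / ((j:ℝ) + 1) - 4 / (4 * j + 5)) -
      (1 / ((j:ℝ) + 1) - (4 * ((j:ℝ) + 1) + 1) / ((2 * ((j:ℝ) + 1) + 1/2)^2 + τ^2)) =
      4 * τ ^ 2 * (4 * τ ^ 2 + 16 * j ^ 2 + 36 * j + 21) /
        ((j + 1) * (4 * j + 5) * ((4 * j + 5) ^ 2 + 4 * τ ^ 2)) := by
    field_simp
    ring
  rw [key]
  positivity

theorem sum_range_hPlusTerm_zero (n : ℕ) :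
    ∑ j ∈ range n, hPlusTerm 0 j = 4 - 4 / (4 * n + 1)
      - 2 * ∑ i ∈ range (2 * n), (-1 : ℝ) ^ i / (2 * i + 1)
      - 2 * ((harmonic (4 * n) : ℝ) - harmonic n) + ((harmonic (2 * n) : ℝ) - harmonic n) := by
  induction n with
  | zero => norm_num
  | succ n ih =>
    rw [sum_range_succ, ih, hPlusTerm_zero, show 4 * (n + 1) = 4 * n + 1 + 1 + 1 + 1 by ring,
      show 2 * (n + 1) = 2 * n + 1 + 1 by ring]
    simp only [harmonic_succ, sum_range_succ, pow_succ, pow_mul]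
    push_cast
    field_simp
    ring

theorem hasSum_hPlusTerm_zero : HasSum (hPlusTerm 0) (4 - π / 2 - 3 * log 2) := by
  rw [hasSum_iff_tendsto_nat_of_nonneg hPlusTerm_zero_nonneg]
  have h4n : Tendsto (fun n : ℕ ↦ 4 / (4 * (n : ℝ) + 1)) atTop (𝓝 0) :=
    tendsto_const_nhds.div_atTop
      (tendsto_atTop_add_const_right _ 1 (tendsto_natCast_atTop_atTop.const_mul_atTop four_pos))
  have hleibniz := tendsto_sum_pi_div_four.comp (tendsto_id.const_mul_atTop' two_pos)
  have h := (((tendsto_const_nhds (x := (4 : ℝ))).sub h4n).sub (hleibniz.const_mul 2)).sub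
    ((tendsto_harmonic_mul_sub_harmonic four_ne_zero).const_mul 2) |>.add
    (tendsto_harmonic_mul_sub_harmonic two_ne_zero)
  convert h using 2
  · exact sum_range_hPlusTerm_zero _
  · rw [show ((4 : ℕ) : ℝ) = 2 ^ 2 by norm_num, log_pow]
    push_cast
    ring

theorem summable_hPlusTerm (τ : ℝ) : Summable (hPlusTerm τ) :=
  (hasSum_hPlusTerm_zero.summable.mul_left (1 + 4 * τ ^ 2)).of_nonneg_of_le
    (fun j ↦ (hPlusTerm_zero_nonneg j).trans (hPlusTerm_le_of_sq_le (by simpa using sq_nonneg τ) j))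
    (hPlusTerm_le_mul_hPlusTerm_zero τ)

theorem hPlus_min_at_zero :
    (∀ τ : ℝ, hPlus 0 ≤ hPlus τ) ∧
      hPlus 0 = -(Real.log (8 * Real.pi) + Real.eulerMascheroniConstant) - Real.pi / 2 := by
  refine ⟨fun τ ↦ ?_, ?_⟩
  · have hsum : ∑' j, hPlusTerm 0 j ≤ ∑' j, hPlusTerm τ j :=
      (summable_hPlusTerm 0).tsum_le_tsum (hPlusTerm_le_of_sq_le (by simpa using sq_nonneg τ))
        (summable_hPlusTerm τ)
    have hpole : 1 / (1 / 4 + τ ^ 2) ≤ 1 / (1 / 4 + (0 : ℝ) ^ 2) :=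
      one_div_le_one_div_of_le (by norm_num) (by simpa using sq_nonneg τ)
    rw [hPlus_eq_tsum_hPlusTerm, hPlus_eq_tsum_hPlusTerm]
    linarith
  · rw [hPlus_eq_tsum_hPlusTerm, hasSum_hPlusTerm_zero.tsum_eq, log_mul (by norm_num) pi_ne_zero,
      show (8 : ℝ) = 2 ^ 3 by norm_num, log_pow]
    push_cast
    ring
end

section
/- Let h₊(τ) = -log π - γ - 1/(1/4 + τ²) + Σ_{j≥1} (1/j - (4j+1)/((2j+1/2)² + τ²)). Then h₊(τ) → +∞ as |τ| → ∞. -/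
open Real Filter

private lemma hPlus_D_pos (τ : ℝ) (j : ℕ) : 0 < (2 * ((j:ℝ) + 1) + 1/2)^2 + τ^2 := by
  positivity

private lemma hPlus_term_nonneg (τ : ℝ) (j : ℕ) :
    0 ≤ 1 / ((j:ℝ) + 1) -
      (4 * ((j:ℝ) + 1) + 1) / ((2 * ((j:ℝ) + 1) + 1/2)^2 + τ^2) := by
  have hj : (0:ℝ) ≤ (j:ℝ) := Nat.cast_nonneg j
  have hD := hPlus_D_pos τ j
  rw [sub_nonneg, div_le_div_iff₀ hD (by positivity)]
  nlinarith [sq_nonneg τ]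

private lemma hPlus_term_le (τ : ℝ) (j : ℕ) :
    1 / ((j:ℝ) + 1) -
      (4 * ((j:ℝ) + 1) + 1) / ((2 * ((j:ℝ) + 1) + 1/2)^2 + τ^2)
      ≤ (1 + τ^2) * (1 / ((j:ℝ) + 1)^2) := by
  have hj : (0:ℝ) ≤ (j:ℝ) := Nat.cast_nonneg j
  have hD := hPlus_D_pos τ j
  have h1 : (0:ℝ) < (j:ℝ) + 1 := by positivity
  rw [div_sub_div _ _ (ne_of_gt h1) (ne_of_gt hD), mul_one_div,
    div_le_div_iff₀ (mul_pos h1 hD) (by positivity)]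
  nlinarith [sq_nonneg τ, sq_nonneg ((j:ℝ)*τ), mul_nonneg hj (sq_nonneg τ)]

private lemma hPlus_summable (τ : ℝ) :
    Summable (fun j : ℕ => 1 / ((j:ℝ) + 1) -
      (4 * ((j:ℝ) + 1) + 1) / ((2 * ((j:ℝ) + 1) + 1/2)^2 + τ^2)) := by
  have hbase : Summable (fun n : ℕ => 1 / ((n:ℝ)) ^ 2) :=
    Real.summable_one_div_nat_pow.mpr one_lt_two
  have hshift : Summable (fun n : ℕ => 1 / ((n:ℝ) + 1) ^ 2) := by
    have := (summable_nat_add_iff 1).mpr hbase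
    refine this.congr fun n => ?_
    push_cast
    ring
  exact Summable.of_nonneg_of_le (hPlus_term_nonneg τ) (hPlus_term_le τ)
    (hshift.mul_left (1 + τ^2))

theorem hPlus_tendsto_atTop :
    Filter.Tendsto hPlus (Filter.cocompact ℝ) Filter.atTop := by
  rw [tendsto_atTop]
  intro b
  obtain ⟨N, hN⟩ := (tendsto_atTop.1 Real.tendsto_sum_range_one_div_nat_succ_atTop
    (b + Real.log Real.pi + Real.eulerMascheroniConstant + 5)).exists
  set C : ℝ := ∑ j ∈ Finset.range N, (4 * ((j:ℝ) + 1) + 1) with hCdef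
  have hC : 0 ≤ C := Finset.sum_nonneg fun j _ => by positivity
  filter_upwards [tendsto_norm_cocompact_atTop.eventually_ge_atTop
    (max 1 (Real.sqrt C))] with τ hτ
  have habs : |τ| = ‖τ‖ := rfl
  have hτ1 : (1:ℝ) ≤ τ ^ 2 := by
    have h1 : (1:ℝ) ≤ |τ| := le_trans (le_max_left _ _) (by rw [habs]; exact hτ)
    nlinarith [sq_abs τ]
  have hτ0 : (0:ℝ) < τ ^ 2 := lt_of_lt_of_le one_pos hτ1
  have hτC : C ≤ τ ^ 2 := by
    have h2 : Real.sqrt C ≤ |τ| := le_trans (le_max_right _ _) (by rw [habs]; exact hτ)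
    nlinarith [Real.sq_sqrt hC, Real.sqrt_nonneg C, sq_abs τ, abs_nonneg τ]
  -- lower bound the tsum by a partial sum
  have hpart : ∑ j ∈ Finset.range N, (1 / ((j:ℝ) + 1) -
        (4 * ((j:ℝ) + 1) + 1) / ((2 * ((j:ℝ) + 1) + 1/2)^2 + τ^2))
      ≤ ∑' j : ℕ, (1 / ((j:ℝ) + 1) -
        (4 * ((j:ℝ) + 1) + 1) / ((2 * ((j:ℝ) + 1) + 1/2)^2 + τ^2)) :=
    Summable.sum_le_tsum _ (fun j _ => hPlus_term_nonneg τ j) (hPlus_summable τ)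
  have hterm : ∀ j ∈ Finset.range N,
      1 / ((j:ℝ) + 1) - (4 * ((j:ℝ) + 1) + 1) / τ ^ 2
        ≤ 1 / ((j:ℝ) + 1) -
          (4 * ((j:ℝ) + 1) + 1) / ((2 * ((j:ℝ) + 1) + 1/2)^2 + τ^2) := by
    intro j _
    have hj : (0:ℝ) ≤ (j:ℝ) := Nat.cast_nonneg j
    have : (4 * ((j:ℝ) + 1) + 1) / ((2 * ((j:ℝ) + 1) + 1/2)^2 + τ^2)
        ≤ (4 * ((j:ℝ) + 1) + 1) / τ ^ 2 := by
      apply div_le_div_of_nonneg_left (by positivity) hτ0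
      nlinarith [sq_nonneg (2 * ((j:ℝ) + 1) + 1/2)]
    linarith
  have hsum2 : ∑ j ∈ Finset.range N, (1 / ((j:ℝ) + 1) - (4 * ((j:ℝ) + 1) + 1) / τ ^ 2)
      = (∑ j ∈ Finset.range N, 1 / ((j:ℝ) + 1)) - C / τ ^ 2 := by
    rw [Finset.sum_sub_distrib, hCdef, Finset.sum_div]
  have hCτ : C / τ ^ 2 ≤ 1 := by
    rw [div_le_one hτ0]; exact hτC
  have hinv : 1 / (1/4 + τ ^ 2) ≤ 4 := by
    rw [div_le_iff₀ (by positivity)]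
    nlinarith
  have hH : (b + Real.log Real.pi + Real.eulerMascheroniConstant + 5)
      ≤ ∑ j ∈ Finset.range N, 1 / ((j:ℝ) + 1) := by
    exact hN
  have hchain := Finset.sum_le_sum hterm
  unfold hPlus
  linarith [hpart, hchain, hsum2.ge, hsum2.le]
end

section
/- Fix a prime p and a real q = p > 1. For z on the unit circle in ℂ, define h(z) = -log(p)·( z/(√p - z) + conj(z)/(√p - conj(z)) ). Then h is real-valued on the unit circle, and its range is exactly the closed interval [-2·log(p)/(√p - 1), 2·log(p)/(√p + 1)]. -/
open Complex

/-- The symbol of the conductor operator on the dilation-invariant subspace of `L²(ℚ_p)`,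
transported to the unit circle. -/
noncomputable def condSymbol (p : ℝ) (z : ℂ) : ℂ :=
  -(Real.log p : ℂ) * (z / ((Real.sqrt p : ℂ) - z) +
    (starRingEnd ℂ) z / ((Real.sqrt p : ℂ) - (starRingEnd ℂ) z))

/-!
Since `√p` is real, the two summands of `condSymbol p z` are complex conjugates, so the symbol
is `-2 log p · Re (z / (√p - z))`, a real number. On the unit circle this real part depends only
on `x = Re z`, as `(√p x - 1) / (p - 2√p x + 1)`, which is increasing in `x ∈ [-1, 1]` because
`√p > 1`. The symbol is therefore a continuous decreasing function of `x`, and its range is the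
interval between its values at `x = 1` and `x = -1`.
-/

open Set

theorem Complex.re_image_norm_eq_one : re '' {z : ℂ | ‖z‖ = 1} = Icc (-1) 1 := by
  apply Subset.antisymm
  · rintro _ ⟨z, hz, rfl⟩
    exact abs_le.mp (hz ▸ abs_re_le_norm z)
  · rintro x ⟨hx₁, hx₂⟩
    refine ⟨exp (Real.arccos x * I), norm_exp_ofReal_mul_I _, ?_⟩
    rw [exp_ofReal_mul_I_re, Real.cos_arccos hx₁ hx₂]

noncomputable def mobiusRatio (s x : ℝ) : ℝ := (s * x - 1) / (s ^ 2 - 2 * s * x + 1)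

theorem Complex.re_div_ofReal_sub_of_norm_eq_one (s : ℝ) {z : ℂ} (hz : ‖z‖ = 1) :
    (z / (s - z)).re = mobiusRatio s z.re := by
  have hsq : z.re * z.re + z.im * z.im = 1 := by
    rw [← normSq_apply, normSq_eq_norm_sq, hz, one_pow]
  have hnormSq : normSq (s - z) = s ^ 2 - 2 * s * z.re + 1 := by
    rw [normSq_apply]; simp only [sub_re, sub_im, ofReal_re, ofReal_im]; linear_combination hsq
  rw [div_re, hnormSq, ← add_div, mobiusRatio]
  congr 1
  simp only [sub_re, sub_im, ofReal_re, ofReal_im]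
  linear_combination -hsq

section mobiusRatio

variable {s : ℝ}

theorem sq_sub_two_mul_add_one_pos (hs : 1 < s) {x : ℝ} (hx : x ≤ 1) :
    0 < s ^ 2 - 2 * s * x + 1 := by
  nlinarith

theorem monotoneOn_mobiusRatio (hs : 1 < s) : MonotoneOn (mobiusRatio s) (Iic 1) := by
  intro x hx y hy hxy
  rw [mobiusRatio, mobiusRatio,
    div_le_div_iff₀ (sq_sub_two_mul_add_one_pos hs hx) (sq_sub_two_mul_add_one_pos hs hy)]
  -- the cross-multiplied difference is `s (s² - 1) (y - x)`
  nlinarith [mul_nonneg (mul_nonneg (by linarith : 0 ≤ s) (by nlinarith : 0 ≤ s ^ 2 - 1))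
    (sub_nonneg.mpr hxy)]

theorem continuousOn_mobiusRatio (hs : 1 < s) : ContinuousOn (mobiusRatio s) (Iic 1) :=
  ContinuousOn.div (by fun_prop) (by fun_prop) fun _ hx ↦ (sq_sub_two_mul_add_one_pos hs hx).ne'

theorem mobiusRatio_one (hs : 1 < s) : mobiusRatio s 1 = 1 / (s - 1) := by
  rw [mobiusRatio, show s ^ 2 - 2 * s * 1 + 1 = (s - 1) * (s - 1) by ring, mul_one,
    div_mul_cancel_left₀ (by linarith), one_div]

theorem mobiusRatio_neg_one (hs : 1 < s) : mobiusRatio s (-1) = -1 / (s + 1) := by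
  rw [mobiusRatio, show s ^ 2 - 2 * s * -1 + 1 = (s + 1) * (s + 1) by ring,
    show s * -1 - 1 = -(s + 1) by ring, neg_div, div_mul_cancel_left₀ (by linarith), neg_div,
    one_div]

theorem image_Icc_const_mul_mobiusRatio (hs : 1 < s) {c : ℝ} (hc : c ≤ 0) :
    (fun x ↦ c * mobiusRatio s x) '' Icc (-1) 1 = Icc (c / (s - 1)) (-c / (s + 1)) := by
  have hanti : AntitoneOn (fun x ↦ c * mobiusRatio s x) (Icc (-1) 1) :=
    fun x hx y hy hxy ↦ mul_le_mul_of_nonpos_left (monotoneOn_mobiusRatio hs hx.2 hy.2 hxy) hc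
  have hcont : ContinuousOn (fun x ↦ c * mobiusRatio s x) (Icc (-1) 1) :=
    continuousOn_const.mul ((continuousOn_mobiusRatio hs).mono fun _ hx ↦ hx.2)
  rw [hcont.image_Icc_of_antitoneOn (by norm_num) hanti, mobiusRatio_one hs,
    mobiusRatio_neg_one hs, mul_one_div, mul_div_assoc', mul_neg_one]

end mobiusRatio

theorem condSymbol_eq_ofReal (p : ℝ) (z : ℂ) :
    condSymbol p z = ((-2 * Real.log p * (z / (Real.sqrt p - z)).re : ℝ) : ℂ) := by
  have hconj : (starRingEnd ℂ) z / ((Real.sqrt p : ℂ) - (starRingEnd ℂ) z) =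
      (starRingEnd ℂ) (z / (Real.sqrt p - z)) := by
    simp only [map_div₀, map_sub, conj_ofReal]
  rw [condSymbol, hconj, add_conj]
  push_cast
  ring

theorem condSymbol_re_of_norm_eq_one (p : ℝ) {z : ℂ} (hz : ‖z‖ = 1) :
    (condSymbol p z).re = -2 * Real.log p * mobiusRatio (Real.sqrt p) z.re := by
  rw [condSymbol_eq_ofReal, ofReal_re, re_div_ofReal_sub_of_norm_eq_one _ hz]

theorem condSymbol_real_and_range (p : ℝ) (hp : 1 < p) :
    (∀ z : ℂ, ‖z‖ = 1 → (condSymbol p z).im = 0) ∧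
      (fun z : ℂ => (condSymbol p z).re) '' {z : ℂ | ‖z‖ = 1} =
        Set.Icc (-(2 * Real.log p) / (Real.sqrt p - 1))
          (2 * Real.log p / (Real.sqrt p + 1)) := by
  refine ⟨fun z _ ↦ by rw [condSymbol_eq_ofReal, ofReal_im], ?_⟩
  have hs : 1 < Real.sqrt p := Real.lt_sqrt zero_le_one |>.mpr (by simpa using hp)
  have hc : -2 * Real.log p ≤ 0 := by linarith [Real.log_pos hp]
  calc (fun z : ℂ => (condSymbol p z).re) '' {z : ℂ | ‖z‖ = 1}
      = (fun x ↦ -2 * Real.log p * mobiusRatio (Real.sqrt p) x) '' (re '' {z : ℂ | ‖z‖ = 1}) :=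
        (image_image ..).symm ▸ image_congr fun _ hz ↦ condSymbol_re_of_norm_eq_one p hz
    _ = _ := by
        rw [re_image_norm_eq_one, image_Icc_const_mul_mobiusRatio hs hc, neg_mul, neg_neg]
end
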